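/- arXiv:1101.3872 — 4 statements merged into one kernel-verified Lean document; each statement's English description precedes it below -/
import Mathlib

section
/- Let X be a full subcategory of A-mod and n ≥ 2. The monomorphism category S_n(X) is closed under extensions in Mor_n(A) if and only if X is closed under extensions in A-mod. -/
/-!
For `⇒`, the constant diagram functor `ModuleCat A ⥤ (Fin n ⥤ ModuleCat A)` is exact, and a
module `M` lies in `𝒳` exactly when the constant diagram on `M` (identity structure maps, zero
cokernels) lies in `S_n(𝒳)`; so `𝒳` is the preimage of `S_n(𝒳)` under an exact functor.

For `⇐`, evaluation at each vertex is exact, so the branches of the middle term lie in `𝒳`.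
For a structure map, apply the snake lemma to the morphism between the short exact sequences
at two consecutive vertices. The outer vertical maps are monomorphisms, hence so is the middle
one; and the connecting map starts at the kernel of the third one, which vanishes, so the
cokernels of the vertical maps form a short exact sequence.
-/

open CategoryTheory Limits

/-- the hom between consecutive objects of `Fin n` (as a preorder category). -/
def consecHom (n k : ℕ) (h : k + 1 < n) :
    ((⟨k, by omega⟩ : Fin n) ⟶ (⟨k + 1, h⟩ : Fin n)) :=
  homOfLE (by simp [Fin.mk_le_mk])

/-- Membership in the monomorphism category `S_n(𝒳)` of a class `P` of `A`-modules, inside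
`Mor_n(A) = (Fin n ⥤ ModuleCat A)`: all branches lie in `P`, all structure maps are
monomorphisms, and all their cokernels lie in `P`. -/
noncomputable def SnP (A : Type) [Ring A] (n : ℕ) (P : ModuleCat A → Prop)
    (F : Fin n ⥤ ModuleCat A) : Prop :=
  (∀ k : Fin n, P (F.obj k)) ∧
  ∀ (k : ℕ) (h : k + 1 < n),
    Mono (F.map (consecHom n k h)) ∧ P (cokernel (F.map (consecHom n k h)))

namespace CategoryTheory.ShortComplex

variable {C : Type*} [Category* C] [Abelian C] {S₁ S₂ : ShortComplex C}

noncomputable def SnakeInput.ofHom (φ : S₁ ⟶ S₂) (h₁ : S₁.ShortExact) (h₂ : S₂.ShortExact) :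
    SnakeInput C where
  L₀ := kernel φ
  L₁ := S₁
  L₂ := S₂
  L₃ := cokernel φ
  v₀₁ := kernel.ι φ
  v₁₂ := φ
  v₂₃ := cokernel.π φ
  h₀ := kernelIsKernel φ
  h₃ := cokernelIsCokernel φ
  L₁_exact := h₁.exact
  epi_L₁_g := h₁.epi_g
  L₂_exact := h₂.exact
  mono_L₂_f := h₂.mono_f

lemma shortExact_cokernel_of_mono (φ : S₁ ⟶ S₂) (h₁ : S₁.ShortExact) (h₂ : S₂.ShortExact)
    [Mono φ.τ₃] : (cokernel φ).ShortExact := by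
  let E := SnakeInput.ofHom φ h₁ h₂
  have hker : IsZero (kernel φ).X₃ :=
    IsZero.of_iso (isZero_kernel_of_mono φ.τ₃) (PreservesKernel.iso π₃ φ)
  have : Mono (cokernel φ).f := E.L₂'_exact.mono_g (hker.eq_of_src _ _)
  have : Epi E.L₂.g := h₂.epi_g
  have : Epi (cokernel φ).g := E.epi_L₃_g
  exact ⟨E.L₃_exact⟩

lemma prop_cokernel_τ₂_of_shortExact (P : ObjectProperty C) [P.IsClosedUnderIsomorphisms]
    [P.IsClosedUnderExtensions] (φ : S₁ ⟶ S₂) (h₁ : S₁.ShortExact) (h₂ : S₂.ShortExact)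
    [Mono φ.τ₃] (hP₁ : P (cokernel φ.τ₁)) (hP₃ : P (cokernel φ.τ₃)) : P (cokernel φ.τ₂) :=
  P.prop_of_iso (PreservesCokernel.iso π₂ φ)
    (P.prop_X₂_of_shortExact (shortExact_cokernel_of_mono φ h₁ h₂)
      (P.prop_of_iso (PreservesCokernel.iso π₁ φ).symm hP₁)
      (P.prop_of_iso (PreservesCokernel.iso π₃ φ).symm hP₃))

end CategoryTheory.ShortComplex

open ObjectProperty

section MonomorphismCategory

variable {A : Type} [Ring A] {n : ℕ} (P : ObjectProperty (ModuleCat A))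

lemma snP_const_iff [P.IsClosedUnderIsomorphisms] [P.ContainsZero] (hn : 0 < n)
    (M : ModuleCat A) : SnP A n P ((Functor.const (Fin n)).obj M) ↔ P M := by
  refine ⟨fun h => h.1 ⟨0, hn⟩, fun hM => ⟨fun _ => hM, fun k hk => ?_⟩⟩
  have : Epi ((Functor.const (Fin n)).obj M |>.map (consecHom n k hk)) :=
    inferInstanceAs (Epi (𝟙 M))
  exact ⟨inferInstanceAs (Mono (𝟙 M)), P.prop_of_isZero (isZero_cokernel_of_epi _)⟩

lemma isClosedUnderExtensions_of_snP [P.IsClosedUnderIsomorphisms] [P.ContainsZero]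
    (hn : 0 < n) [IsClosedUnderExtensions (SnP A n P)] : P.IsClosedUnderExtensions := by
  have : P = inverseImage (SnP A n P) (Functor.const (Fin n)) :=
    funext fun M => propext (snP_const_iff P hn M).symm
  rw [this]
  infer_instance

lemma snP_isClosedUnderExtensions [P.IsClosedUnderIsomorphisms] [P.IsClosedUnderExtensions] :
    IsClosedUnderExtensions (SnP A n P) where
  prop_X₂_of_shortExact {S} hS h₁ h₃ := by
    have hS' (j : Fin n) := hS.map_of_exact ((evaluation (Fin n) (ModuleCat A)).obj j)
    refine ⟨fun j => P.prop_X₂_of_shortExact (hS' j) (h₁.1 j) (h₃.1 j), fun k hk => ?_⟩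
    let φ := S.mapNatTrans ((evaluation (Fin n) (ModuleCat A)).map (consecHom n k hk))
    have : Mono φ.τ₁ := (h₁.2 k hk).1
    have : Mono φ.τ₃ := (h₃.2 k hk).1
    have := (hS' ⟨k, by omega⟩).mono_f
    have := (hS' ⟨k + 1, hk⟩).mono_f
    exact ⟨ShortComplex.mono_τ₂_of_exact_of_mono φ (hS' _).exact,
      ShortComplex.prop_cokernel_τ₂_of_shortExact P φ (hS' _) (hS' _) (h₁.2 k hk).2 (h₃.2 k hk).2⟩

end MonomorphismCategory

theorem stmt2_general
    (A : Type) [Ring A]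
    (n : ℕ) (hn : 2 ≤ n)
    (P : ModuleCat A → Prop)
    (hiso : ∀ M N : ModuleCat A, (M ≅ N) → P M → P N)
    (hzero : P (ModuleCat.of A PUnit)) :
    (∀ S : ShortComplex (Fin n ⥤ ModuleCat A), S.ShortExact →
        SnP A n P S.X₁ → SnP A n P S.X₃ → SnP A n P S.X₂) ↔
    (∀ S : ShortComplex (ModuleCat A), S.ShortExact → P S.X₁ → P S.X₃ → P S.X₂) := by
  have : IsClosedUnderIsomorphisms P := ⟨fun e => hiso _ _ e⟩
  have : ContainsZero P := ⟨⟨_, ModuleCat.isZero_of_subsingleton _, hzero⟩⟩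
  constructor
  · intro h S hS
    have : IsClosedUnderExtensions (SnP A n P) := ⟨h _⟩
    exact (isClosedUnderExtensions_of_snP P (show 0 < n by omega)).prop_X₂_of_shortExact hS
  · intro h S hS
    have : IsClosedUnderExtensions P := ⟨h _⟩
    exact (snP_isClosedUnderExtensions P).prop_X₂_of_shortExact hS

/-- Let `A` be an Artin algebra, `n ≥ 2`, and `𝒳` a full subcategory of `A`-mod
(given by a class `P` of modules, closed under isomorphism and containing the zero module).
Then `S_n(𝒳)` is closed under extensions in `Mor_n(A)` if and only if `𝒳` is closed under
extensions in `A`-mod. -/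
theorem stmt2 (R : Type) [CommRing R] [IsArtinianRing R]
    (A : Type) [Ring A] [Algebra R A] [Module.Finite R A]
    (n : ℕ) (hn : 2 ≤ n)
    (P : ModuleCat A → Prop)
    (hiso : ∀ M N : ModuleCat A, (M ≅ N) → P M → P N)
    (hzero : P (ModuleCat.of A PUnit)) :
    (∀ S : ShortComplex (Fin n ⥤ ModuleCat A), S.ShortExact →
        SnP A n P S.X₁ → SnP A n P S.X₃ → SnP A n P S.X₂) ↔
    (∀ S : ShortComplex (ModuleCat A), S.ShortExact → P S.X₁ → P S.X₃ → P S.X₂) :=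
  stmt2_general A n hn P hiso hzero
end

section
/- For each 1 ≤ i ≤ n-1, each A-module M, and each object X = (X_j, φ_j) of Mor_n(A), there is an isomorphism of abelian groups Hom_{Mor_n(A)}(X, m_i(M)) ≅ Hom_A(Coker(φ_1⋯φ_i), M), natural in both positions. -/
/-!
The conditions `f_j ∘ φ_j = f_{j+1}` force `f_{k+1} = f_1 ∘ φ_1⋯φ_k` for `k < i`, so a morphism
`X → m_i(M)` is determined by `f_1`, and its last condition `f_i ∘ φ_i = 0` becomes
`f_1 ∘ φ_1⋯φ_i = 0`. Conversely every `u : X_1 → M` killing the image of `φ_1⋯φ_i` extends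
to the morphism with components `u ∘ φ_1⋯φ_k`.
-/

/-- The composite `φ_1 ⋯ φ_i : X_{i+1} → X_1` of the structure maps of an object of the
morphism category; `compMap φ 0 = id`. -/
def compMap {A : Type} [Ring A] {X : ℕ → Type} [∀ j, AddCommGroup (X j)]
    [∀ j, Module A (X j)] (φ : ∀ j, X (j + 1) →ₗ[A] X j) : ∀ i, X (i + 1) →ₗ[A] X 1
  | 0 => LinearMap.id
  | i + 1 => (compMap φ i).comp (φ (i + 1))

section HomToTrunc

variable {A : Type} [Ring A] {X : ℕ → Type} [∀ j, AddCommGroup (X j)] [∀ j, Module A (X j)]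
  (φ : ∀ j, X (j + 1) →ₗ[A] X j) {M : Type} [AddCommGroup M] [Module A M] (i : ℕ)

/-- `f` is a morphism `(X_j, φ_j) → m_i(M)` of `Mor_n(A)`, written as its family of components. -/
def IsHomToTrunc (f : ∀ j, X j →ₗ[A] M) : Prop :=
  (∀ j, 1 ≤ j → j + 1 ≤ i → (f j).comp (φ j) = f (j + 1)) ∧
    ((f i).comp (φ i) = 0) ∧ (∀ j, j < 1 ∨ i < j → f j = 0)

def truncExtend (u : X 1 →ₗ[A] M) : ∀ j, X j →ₗ[A] M
  | 0 => 0
  | k + 1 => if k + 1 ≤ i then u.comp (compMap φ k) else 0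

variable {φ i}

theorem truncExtend_succ (u : X 1 →ₗ[A] M) (k : ℕ) :
    truncExtend φ i u (k + 1) = if k + 1 ≤ i then u.comp (compMap φ k) else 0 :=
  rfl

theorem IsHomToTrunc.apply_succ_eq {f : ∀ j, X j →ₗ[A] M} (hf : IsHomToTrunc φ i f) :
    ∀ k, k + 1 ≤ i → f (k + 1) = (f 1).comp (compMap φ k)
  | 0, _ => rfl
  | k + 1, hk => by
    rw [← hf.1 (k + 1) (by omega) hk, hf.apply_succ_eq k (by omega), LinearMap.comp_assoc]
    rfl

theorem IsHomToTrunc.eq_truncExtend {f : ∀ j, X j →ₗ[A] M} (hf : IsHomToTrunc φ i f) :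
    f = truncExtend φ i (f 1) := by
  funext j
  match j with
  | 0 => exact hf.2.2 0 (Or.inl one_pos)
  | k + 1 =>
    rw [truncExtend_succ]
    split_ifs with hk
    · exact hf.apply_succ_eq k hk
    · exact hf.2.2 (k + 1) (Or.inr (by omega))

theorem IsHomToTrunc.comp_compMap_eq_zero {f : ∀ j, X j →ₗ[A] M} (hf : IsHomToTrunc φ i f) :
    (f 1).comp (compMap φ i) = 0 := by
  match i, hf with
  | 0, hf => rw [hf.2.2 1 (Or.inr one_pos), LinearMap.zero_comp]
  | m + 1, hf =>
    rw [compMap, ← LinearMap.comp_assoc, ← hf.apply_succ_eq m le_rfl]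
    exact hf.2.1

theorem isHomToTrunc_truncExtend {u : X 1 →ₗ[A] M} (hu : u.comp (compMap φ i) = 0) :
    IsHomToTrunc φ i (truncExtend φ i u) := by
  refine ⟨fun j hj hji => ?_, ?_, fun j hj => ?_⟩
  · obtain ⟨k, rfl⟩ : ∃ k, j = k + 1 := ⟨j - 1, by omega⟩
    rw [truncExtend_succ, truncExtend_succ, if_pos (by omega), if_pos hji]
    rfl
  · match i, hu with
    | 0, _ => rfl
    | m + 1, hu =>
      rw [truncExtend_succ, if_pos le_rfl]
      exact hu
  · match j, hj with
    | 0, _ => rfl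
    | k + 1, hj => exact if_neg (by omega)

theorem truncExtend_one {u : X 1 →ₗ[A] M} (hu : u.comp (compMap φ i) = 0) :
    truncExtend φ i u 1 = u := by
  match i, hu with
  | 0, hu => exact hu.symm
  | m + 1, _ =>
    rw [truncExtend_succ, if_pos (by omega)]
    rfl

end HomToTrunc

theorem stmt6_general (A : Type) [Ring A]
    (X : ℕ → Type) [∀ j, AddCommGroup (X j)] [∀ j, Module A (X j)]
    (φ : ∀ j, X (j + 1) →ₗ[A] X j)
    (M : Type) [AddCommGroup M] [Module A M]
    (i : ℕ) :
    Function.Injective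
      (fun f : {f : ∀ j, X j →ₗ[A] M //
          (∀ j, 1 ≤ j → j + 1 ≤ i → (f j).comp (φ j) = f (j + 1)) ∧
          ((f i).comp (φ i) = 0) ∧
          (∀ j, j < 1 ∨ i < j → f j = 0)} => f.1 1) ∧
    Set.range
      (fun f : {f : ∀ j, X j →ₗ[A] M //
          (∀ j, 1 ≤ j → j + 1 ≤ i → (f j).comp (φ j) = f (j + 1)) ∧
          ((f i).comp (φ i) = 0) ∧
          (∀ j, j < 1 ∨ i < j → f j = 0)} => f.1 1) =
      {u : X 1 →ₗ[A] M | u.comp (compMap φ i) = 0} := by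
  refine ⟨fun f g hfg => Subtype.ext ?_, Set.ext fun u => ⟨?_, fun hu => ?_⟩⟩
  · rw [IsHomToTrunc.eq_truncExtend f.2, IsHomToTrunc.eq_truncExtend g.2]
    exact congrArg _ hfg
  · rintro ⟨f, rfl⟩
    exact IsHomToTrunc.comp_compMap_eq_zero f.2
  · exact ⟨⟨_, isHomToTrunc_truncExtend hu⟩, truncExtend_one hu⟩

/-- Let `A` be an Artin algebra, `n ≥ 2`, `1 ≤ i ≤ n-1`, `M` an `A`-module and
`X = (X_j, φ_j)` an object of `Mor_n(A)`.  A morphism `X → m_i(M)` of `Mor_n(A)` is precisely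
a family `f_j : X_j → M` (`1 ≤ j ≤ i`, the components for `j > i` being `0`) with
`f_j ∘ φ_j = f_{j+1}` (for `j < i`) and `f_i ∘ φ_i = 0`; the assignment `f ↦ f_1` is an
(automatically additive and natural) injection whose image consists exactly of the
`A`-maps `X_1 → M` vanishing on the image of `φ_1⋯φ_i`, i.e.
`Hom_{Mor_n(A)}(X, m_i(M)) ≅ Hom_A(Coker (φ_1⋯φ_i), M)`. -/
theorem stmt6 (R : Type) [CommRing R] [IsArtinianRing R]
    (A : Type) [Ring A] [Algebra R A] [Module.Finite R A]
    (n : ℕ) (hn : 2 ≤ n)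
    (X : ℕ → Type) [∀ j, AddCommGroup (X j)] [∀ j, Module A (X j)]
    (φ : ∀ j, X (j + 1) →ₗ[A] X j)
    (M : Type) [AddCommGroup M] [Module A M]
    (i : ℕ) (hi1 : 1 ≤ i) (hi2 : i ≤ n - 1) :
    Function.Injective
      (fun f : {f : ∀ j, X j →ₗ[A] M //
          (∀ j, 1 ≤ j → j + 1 ≤ i → (f j).comp (φ j) = f (j + 1)) ∧
          ((f i).comp (φ i) = 0) ∧
          (∀ j, j < 1 ∨ i < j → f j = 0)} => f.1 1) ∧
    Set.range
      (fun f : {f : ∀ j, X j →ₗ[A] M //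
          (∀ j, 1 ≤ j → j + 1 ≤ i → (f j).comp (φ j) = f (j + 1)) ∧
          ((f i).comp (φ i) = 0) ∧
          (∀ j, j < 1 ∨ i < j → f j = 0)} => f.1 1) =
      {u : X 1 →ₗ[A] M | u.comp (compMap φ i) = 0} :=
  stmt6_general A X φ M i
end

section
/- For every object X = (X_i, φ_i) of Mor_n(A), the canonical epimorphism rMon(X) → X (given in each branch by projection onto the first summand) is a right minimal approximation of X in the monomorphism category S_n(A). In particular S_n(A) is contravariantly finite in Mor_n(A). -/
open CategoryTheory Limits

attribute [local instance] CategoryTheory.Abelian.hasFiniteBiproducts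

/-- Membership in `S_n(A)`: all structure maps are monomorphisms. -/
def SnA (A : Type) [Ring A] (n : ℕ) (F : Fin n ⥤ ModuleCat A) : Prop :=
  ∀ (k : ℕ) (h : k + 1 < n), Mono (F.map (consecHom n k h))

/-!
A morphism `C' → X` from an object of `S_n(A)` lifts through `rMon(X) → X` one branch at a
time: the component into the new summand `IKer φ_i` is obtained by extending along the
monomorphism of `C'`, using injectivity. For minimality, an endomorphism `h` of `rMon(X)` over
`X` is, branch by branch, triangular with respect to `X_i ⊕ (injective part)`; on each new
summand `IKer φ_i` it restricts to an endomorphism fixing the essential monomorphism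
`Ker φ_i ↪ IKer φ_i`, which is therefore an isomorphism. Induction along the branches shows
that `h` is an isomorphism. Injective envelopes of modules are obtained from a maximal essential
extension inside an injective module, which is a direct summand.
-/

universe v

section EssentialExtension

variable {α : Type*}

def IsEssentialExt [Lattice α] [OrderBot α] (K N : α) : Prop :=
  K ≤ N ∧ ∀ L ≤ N, Disjoint L K → L = ⊥

theorem IsEssentialExt.refl [Lattice α] [OrderBot α] (K : α) : IsEssentialExt K K :=
  ⟨le_rfl, fun _ hL hLK => hLK.eq_bot_of_le hL⟩

theorem IsEssentialExt.trans [Lattice α] [OrderBot α] {K N P : α} (hKN : IsEssentialExt K N)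
    (hNP : IsEssentialExt N P) : IsEssentialExt K P := by
  refine ⟨hKN.1.trans hNP.1, fun L hLP hLK => hNP.2 L hLP ?_⟩
  rw [disjoint_iff]
  exact hKN.2 _ inf_le_right (hLK.mono_left inf_le_left)

variable [CompleteLattice α] [IsCompactlyGenerated α]

theorem exists_maximal_isEssentialExt (K : α) : ∃ N, Maximal (IsEssentialExt K) N := by
  have hsSup (c : Set α) (hc : ∀ N ∈ c, IsEssentialExt K N) (hchain : IsChain (· ≤ ·) c)
      {N₀ : α} (hN₀ : N₀ ∈ c) : IsEssentialExt K (sSup c) := by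
    refine ⟨(hc N₀ hN₀).1.trans (le_sSup hN₀), fun L hL hLK => ?_⟩
    rw [← inf_eq_left.2 hL, hchain.directedOn.inf_sSup_eq, iSup₂_eq_bot]
    exact fun N hN => (hc N hN).2 _ inf_le_right (hLK.mono_left inf_le_left)
  obtain ⟨N, -, hN⟩ := zorn_le_nonempty₀ {N | IsEssentialExt K N}
    (fun c hc hchain _ hN₀ => ⟨sSup c, hsSup c hc hchain hN₀, fun _ => le_sSup⟩) K
    (IsEssentialExt.refl K)
  exact ⟨N, hN⟩

theorem exists_maximal_disjoint (N : α) : ∃ M, Maximal (Disjoint · N) M := by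
  obtain ⟨M, -, hM⟩ := zorn_le_nonempty₀ {M | Disjoint M N} (fun c hc hchain _ _ =>
    ⟨sSup c, hchain.directedOn.disjoint_sSup_left.2 hc, fun _ => le_sSup⟩) ⊥ disjoint_bot_left
  exact ⟨M, hM⟩

end EssentialExtension

/- With `M` maximal among submodules disjoint from `N`, extending `N ↪ E` along `N ↪ E ⧸ M`
gives `σ : E ⧸ M → E` whose range is an essential extension of `N`; maximality of `N` forces
`range σ = N`, and `σ ∘ mkQ` is the retraction. -/
theorem Submodule.exists_retraction_of_maximal_isEssentialExt {R E : Type*} [Ring R]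
    [AddCommGroup E] [Module R E] [Module.Injective R E] {K N : Submodule R E}
    (hN : Maximal (IsEssentialExt K) N) : ∃ ρ : E →ₗ[R] N, ∀ y : N, ρ y = y := by
  obtain ⟨M, hM⟩ := exists_maximal_disjoint N
  have hinj : Function.Injective (M.mkQ ∘ₗ N.subtype) := by
    rw [← LinearMap.ker_eq_bot, LinearMap.ker_comp, Submodule.ker_mkQ,
      ← Submodule.disjoint_iff_comap_eq_bot, disjoint_comm]
    exact hM.1
  obtain ⟨σ, hσ⟩ := Module.Injective.out (M.mkQ ∘ₗ N.subtype) hinj N.subtype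
  have hNσ : N ≤ LinearMap.range σ := fun y hy => ⟨M.mkQ y, hσ ⟨y, hy⟩⟩
  have hσess : IsEssentialExt N (LinearMap.range σ) := by
    refine ⟨hNσ, fun L hL hLN => ?_⟩
    have hdisj : Disjoint ((L.comap σ).comap M.mkQ) N := by
      rw [Submodule.disjoint_def]
      intro y hyL hyN
      have hy : σ (M.mkQ y) = y := hσ ⟨y, hyN⟩
      rw [Submodule.mem_comap, Submodule.mem_comap, hy] at hyL
      exact (Submodule.disjoint_def.1 hLN) y hyL hyN
    have hM' : (L.comap σ).comap M.mkQ ≤ M :=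
      hM.2 hdisj fun m hm => by simp [(Submodule.Quotient.mk_eq_zero M).2 hm]
    rw [eq_bot_iff]
    intro x hx
    obtain ⟨z, rfl⟩ := hL hx
    obtain ⟨w, rfl⟩ := M.mkQ_surjective z
    have hw : w ∈ M := hM' hx
    simp [(Submodule.Quotient.mk_eq_zero M).2 hw]
  have hσN : LinearMap.range σ ≤ N := hN.2 (hN.1.trans hσess) hNσ
  exact ⟨(σ ∘ₗ M.mkQ).codRestrict N fun x => hσN ⟨_, rfl⟩, fun y => Subtype.ext (hσ y)⟩

structure IsInjectiveHull {C : Type*} [Category C] {K I : C} (e : K ⟶ I) : Prop where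
  injective : Injective I
  mono : Mono e
  essential : ∀ ⦃Z : C⦄ (g : I ⟶ Z), Mono (e ≫ g) → Mono g

theorem IsInjectiveHull.isIso_of_comp_eq_self {C : Type*} [Category C] {K I : C} {e : K ⟶ I}
    (he : IsInjectiveHull e) {p : I ⟶ I} (hp : e ≫ p = e) : IsIso p := by
  have := he.injective
  have := he.mono
  have : Mono p := he.essential p (by rwa [hp])
  obtain ⟨s, hs⟩ := Injective.factors (𝟙 I) p
  have : Mono s := he.essential s (by rwa [← hp, Category.assoc, hs, Category.comp_id])
  exact ⟨s, hs, (cancel_mono s).1 (by rw [Category.assoc, hs, Category.comp_id, Category.id_comp])⟩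

theorem ModuleCat.exists_isInjectiveHull {R : Type*} [Ring R] [Small.{v} R]
    (K : ModuleCat.{v} R) : ∃ (I : ModuleCat.{v} R) (e : K ⟶ I), IsInjectiveHull e := by
  let E := Injective.under K
  have : Injective (ModuleCat.of R E) := inferInstanceAs (Injective (Injective.under K))
  have : Module.Injective R E := Module.injective_module_of_injective_object R E
  have hι : Function.Injective (Injective.ι K) := (ModuleCat.mono_iff_injective _).1 inferInstance
  obtain ⟨N, hN⟩ := exists_maximal_isEssentialExt (LinearMap.range (Injective.ι K).hom)
  obtain ⟨ρ, hρ⟩ := Submodule.exists_retraction_of_maximal_isEssentialExt hN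
  let e : K ⟶ ModuleCat.of R N :=
    ModuleCat.ofHom ((Injective.ι K).hom.codRestrict N fun k => hN.1.1 ⟨k, rfl⟩)
  have he : Function.Injective e := fun a b hab => hι (congrArg Subtype.val hab)
  refine ⟨_, e, ⟨?_, (ModuleCat.mono_iff_injective e).2 he, fun Z g heg => ?_⟩⟩
  · have : Retract (ModuleCat.of R N) E :=
      ⟨ModuleCat.ofHom N.subtype, ModuleCat.ofHom ρ, by ext y; exact congrArg Subtype.val (hρ y)⟩
    exact this.injective
  · rw [ModuleCat.mono_iff_injective] at heg ⊢
    rw [← LinearMap.ker_eq_bot, ← (Submodule.map_injective_of_injective N.subtype_injective).eq_iff,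
      Submodule.map_bot]
    refine hN.1.2 _ (Submodule.map_subtype_le _ _) (Submodule.disjoint_def.2 ?_)
    rintro _ ⟨y, hy, rfl⟩ ⟨k, hk⟩
    have hek : e k = y := Subtype.ext hk
    have : k = 0 := heg (by simpa [hek] using hy)
    simp [← hk, this]

class HasInjectiveHulls (C : Type*) [Category C] : Prop where
  exists_isInjectiveHull : ∀ K : C, ∃ (I : C) (e : K ⟶ I), IsInjectiveHull e

instance {R : Type*} [Ring R] [Small.{v} R] : HasInjectiveHulls (ModuleCat.{v} R) :=
  ⟨ModuleCat.exists_isInjectiveHull⟩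

section InjectiveHull

variable {C : Type*} [Category C] [HasInjectiveHulls C]

noncomputable def injectiveHull (K : C) : C :=
  (HasInjectiveHulls.exists_isInjectiveHull K).choose

noncomputable def injectiveHull.ι (K : C) : K ⟶ injectiveHull K :=
  (HasInjectiveHulls.exists_isInjectiveHull K).choose_spec.choose

theorem injectiveHull.isInjectiveHull_ι (K : C) : IsInjectiveHull (injectiveHull.ι K) :=
  (HasInjectiveHulls.exists_isInjectiveHull K).choose_spec.choose_spec

instance (K : C) : Injective (injectiveHull K) := (injectiveHull.isInjectiveHull_ι K).injective

end InjectiveHull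

section Biprod

variable {C : Type*} [Category C] [Preadditive C] [HasBinaryBiproducts C]

theorem isIso_of_biprod_triangular {A B A' B' : C} (u : A ⊞ B ⟶ A' ⊞ B')
    (h₀ : biprod.inr ≫ u ≫ biprod.fst = 0) [IsIso (biprod.inl ≫ u ≫ biprod.fst)]
    [IsIso (biprod.inr ≫ u ≫ biprod.snd)] : IsIso u := by
  set a := biprod.inl ≫ u ≫ biprod.fst
  set b := biprod.inl ≫ u ≫ biprod.snd
  set d := biprod.inr ≫ u ≫ biprod.snd
  have hu : u = biprod.desc (biprod.lift a b) (biprod.lift 0 d) := by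
    apply biprod.hom_ext' <;> apply biprod.hom_ext <;> simp [a, b, d, h₀]
  refine ⟨biprod.desc (biprod.lift (inv a) (-(inv a ≫ b ≫ inv d))) (biprod.lift 0 (inv d)),
    ?_, ?_⟩ <;> rw [hu] <;> apply biprod.hom_ext' <;> apply biprod.hom_ext <;>
    simp [Preadditive.add_comp]

theorem isIso_of_comp_fst_eq_fst {A B : C} (u : A ⊞ B ⟶ A ⊞ B) (hu : u ≫ biprod.fst = biprod.fst)
    (hd : IsIso (biprod.inr ≫ u ≫ biprod.snd)) : IsIso u := by
  have : IsIso (biprod.inl ≫ u ≫ biprod.fst) := by rw [hu, biprod.inl_fst]; infer_instance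
  exact isIso_of_biprod_triangular u (by rw [hu, biprod.inr_fst])

end Biprod

section Step

variable {C : Type*} [Category C] [Preadditive C] [HasBinaryBiproducts C] {X X' I : C}
  (φ : X ⟶ X') (e : X ⟶ I) (J : C)

/-- The structure map `θ_i` of `rMon`, for `φ = φ_i`, `e = e_i` and `J` the injective summands
already present. -/
noncomputable def rMonStep : X ⊞ J ⟶ X' ⊞ (I ⊞ J) :=
  biprod.lift (biprod.fst ≫ φ) (biprod.lift (biprod.fst ≫ e) biprod.snd)

@[simp]
theorem rMonStep_fst : rMonStep φ e J ≫ biprod.fst = biprod.fst ≫ φ :=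
  biprod.lift_fst _ _

@[simp]
theorem rMonStep_snd_fst : rMonStep φ e J ≫ biprod.snd ≫ biprod.fst = biprod.fst ≫ e := by
  simp [rMonStep]

@[simp]
theorem rMonStep_snd_snd : rMonStep φ e J ≫ biprod.snd ≫ biprod.snd = biprod.snd := by
  simp [rMonStep]

theorem inr_rMonStep : biprod.inr ≫ rMonStep φ e J = biprod.inr ≫ biprod.inr := by
  ext <;> simp

theorem kernel_ι_inl_rMonStep [HasKernel φ] :
    kernel.ι φ ≫ biprod.inl ≫ rMonStep φ e J = (kernel.ι φ ≫ e) ≫ biprod.inl ≫ biprod.inr := by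
  ext <;> simp

instance mono_rMonStep [HasKernel φ] [Mono (kernel.ι φ ≫ e)] : Mono (rMonStep φ e J) := by
  rw [Preadditive.mono_iff_cancel_zero]
  intro T g hg
  have h₁ : (g ≫ biprod.fst) ≫ φ = 0 := by simpa using hg =≫ biprod.fst
  have h₂ : g ≫ biprod.fst ≫ e = 0 := by simpa using hg =≫ (biprod.snd ≫ biprod.fst)
  have h₃ : g ≫ biprod.snd = 0 := by simpa using hg =≫ (biprod.snd ≫ biprod.snd)
  have h₄ : kernel.lift φ _ h₁ = 0 := by
    rw [← cancel_mono (kernel.ι φ ≫ e), ← Category.assoc, kernel.lift_ι, Category.assoc, h₂,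
      zero_comp]
  have h₅ : g ≫ biprod.fst = 0 := by rw [← kernel.lift_ι φ _ h₁, h₄, zero_comp]
  exact biprod.hom_ext _ _ (by simpa using h₅) (by simpa using h₃)

theorem lift_comp_rMonStep {Z Z' : C} (ψ : Z ⟶ Z') [Mono ψ] [Injective (I ⊞ J)] (g : Z ⟶ X)
    (g' : Z' ⟶ X') (hg : g ≫ φ = ψ ≫ g') (t : Z ⟶ J) :
    biprod.lift g t ≫ rMonStep φ e J =
      ψ ≫ biprod.lift g' (Injective.factorThru (biprod.lift (g ≫ e) t) ψ) := by
  ext <;> simp [hg]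

theorem isIso_inr_comp_snd_of_rMonStep [HasKernel φ] (he : IsInjectiveHull (kernel.ι φ ≫ e))
    {u : X ⊞ J ⟶ X ⊞ J} {v : X' ⊞ (I ⊞ J) ⟶ X' ⊞ (I ⊞ J)}
    (huv : rMonStep φ e J ≫ v = u ≫ rMonStep φ e J) (hu : u ≫ biprod.fst = biprod.fst)
    (hd : IsIso (biprod.inr ≫ u ≫ biprod.snd)) : IsIso (biprod.inr ≫ v ≫ biprod.snd) := by
  have hfst : rMonStep φ e J ≫ v ≫ biprod.snd ≫ biprod.fst = biprod.fst ≫ e := by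
    rw [reassoc_of% huv]
    simp [reassoc_of% hu]
  have hsnd : rMonStep φ e J ≫ v ≫ biprod.snd ≫ biprod.snd = u ≫ biprod.snd := by
    rw [reassoc_of% huv]
    simp
  -- `biprod.inr ≫ v ≫ biprod.snd` is triangular; its `I`-entry fixes the essential
  -- monomorphism `kernel.ι φ ≫ e`, and its `J`-entry is that of `u`.
  have hI : IsIso (biprod.inl ≫ (biprod.inr ≫ v ≫ biprod.snd) ≫ biprod.fst) := by
    refine he.isIso_of_comp_eq_self ?_
    simp only [Category.assoc]
    rw [← reassoc_of% kernel_ι_inl_rMonStep, hfst, biprod.inl_fst_assoc]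
  have hJ : IsIso (biprod.inr ≫ (biprod.inr ≫ v ≫ biprod.snd) ≫ biprod.snd) := by
    simp only [Category.assoc]
    rwa [← reassoc_of% inr_rMonStep, hsnd]
  refine isIso_of_biprod_triangular _ ?_
  simp only [Category.assoc]
  rw [← reassoc_of% inr_rMonStep, hfst, biprod.inr_fst_assoc, zero_comp]

end Step

section RMon

open ZeroObject

variable {C : Type*} [Category C] [Abelian C] [HasInjectiveHulls C] (Y : ℕ ⥤ C)

abbrev succMap (i : ℕ) : Y.obj i ⟶ Y.obj (i + 1) := Y.map (homOfLE (Nat.le_add_right i 1))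

noncomputable abbrev kerHull (i : ℕ) : C := injectiveHull (kernel (succMap Y i))

noncomputable def toKerHull (i : ℕ) : Y.obj i ⟶ kerHull Y i :=
  Injective.factorThru (injectiveHull.ι _) (kernel.ι (succMap Y i))

theorem isInjectiveHull_kernel_ι_toKerHull (i : ℕ) :
    IsInjectiveHull (kernel.ι (succMap Y i) ≫ toKerHull Y i) := by
  rw [toKerHull, Injective.comp_factorThru]
  exact injectiveHull.isInjectiveHull_ι _

instance (i : ℕ) : Mono (kernel.ι (succMap Y i) ≫ toKerHull Y i) :=
  (isInjectiveHull_kernel_ι_toKerHull Y i).mono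

noncomputable def kerHullSum : ℕ → C
  | 0 => 0
  | i + 1 => kerHull Y i ⊞ kerHullSum i

instance : ∀ i, Injective (kerHullSum Y i)
  | 0 => Injective.zero_injective
  | i + 1 => by
    have := instInjectiveKerHullSum i
    exact inferInstanceAs (Injective (kerHull Y i ⊞ kerHullSum Y i))

/- Our diagrams go `i ⟶ i + 1`, opposite to the paper's `φ_i : X_{i+1} → X_i`, so
`rMonObj Y i = Y_i ⊞ (I_{i-1} ⊞ (⋯ ⊞ (I_0 ⊞ 0)))` with `I_j` the injective hull of
`ker (Y_j ⟶ Y_{j+1})`. -/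
noncomputable abbrev rMonObj (i : ℕ) : C := Y.obj i ⊞ kerHullSum Y i

noncomputable abbrev rMonMap (i : ℕ) : rMonObj Y i ⟶ rMonObj Y (i + 1) :=
  rMonStep (succMap Y i) (toKerHull Y i) (kerHullSum Y i)

noncomputable def rMon : ℕ ⥤ C := Functor.ofSequence (rMonMap Y)

theorem rMon_map_succ (i : ℕ) :
    (rMon Y).map (homOfLE (Nat.le_add_right i 1)) = rMonMap Y i :=
  Functor.ofSequence_map_homOfLE_succ _ i

instance (i : ℕ) : Mono ((rMon Y).map (homOfLE (Nat.le_add_right i 1))) := by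
  rw [rMon_map_succ]
  exact mono_rMonStep _ _ _

noncomputable def rMonπ : rMon Y ⟶ Y :=
  NatTrans.ofSequence (fun i => biprod.fst) fun i => by
    rw [rMon_map_succ]
    exact rMonStep_fst _ _ _

instance (i : ℕ) : Epi ((rMonπ Y).app i) := inferInstanceAs (Epi (biprod.fst : rMonObj Y i ⟶ _))

variable {Y}

noncomputable def liftKerHullSum {Y' : ℕ ⥤ C}
    (hY' : ∀ i, Mono (Y'.map (homOfLE (Nat.le_add_right i 1)))) (g : Y' ⟶ Y) :
    ∀ i, Y'.obj i ⟶ kerHullSum Y i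
  | 0 => 0
  | i + 1 =>
    have := hY' i
    Injective.factorThru (biprod.lift (g.app i ≫ toKerHull Y i) (liftKerHullSum hY' g i))
      (Y'.map (homOfLE (Nat.le_add_right i 1)))

theorem exists_lift_rMonπ {Y' : ℕ ⥤ C} (hY' : ∀ i, Mono (Y'.map (homOfLE (Nat.le_add_right i 1))))
    (g : Y' ⟶ Y) : ∃ h : Y' ⟶ rMon Y, h ≫ rMonπ Y = g := by
  refine ⟨NatTrans.ofSequence (fun i => biprod.lift (g.app i) (liftKerHullSum hY' g i))
    fun i => ?_, ?_⟩
  · rw [rMon_map_succ]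
    have := hY' i
    exact (lift_comp_rMonStep _ _ _ _ _ _ (g.naturality _).symm _).symm
  · ext i
    exact biprod.lift_fst _ _

end RMon

section Clamp

variable {C : Type*} [Category C] (m : ℕ)

abbrev finValFunctor : Fin (m + 1) ⥤ ℕ := Monotone.functor (f := Fin.val) fun _ _ h => h

abbrev clampFunctor : ℕ ⥤ Fin (m + 1) := Fin.clamp_monotone.functor

theorem Fin.clamp_val_self (k : Fin (m + 1)) : Fin.clamp k.val m = k :=
  Fin.ext (min_eq_left (Nat.lt_succ_iff.1 k.2))

def clampRestrictIso (F : Fin (m + 1) ⥤ C) : finValFunctor m ⋙ clampFunctor m ⋙ F ≅ F :=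
  NatIso.ofComponents (fun k => F.mapIso (eqToIso (Fin.clamp_val_self m k))) fun f => by
    simp only [Functor.comp_map, Functor.mapIso_hom, ← F.map_comp]
    congr 1

theorem clampRestrictIso_hom_naturality {F G : Fin (m + 1) ⥤ C} (g : F ⟶ G) :
    Functor.whiskerLeft (finValFunctor m) (Functor.whiskerLeft (clampFunctor m) g) ≫
      (clampRestrictIso m G).hom = (clampRestrictIso m F).hom ≫ g := by
  ext k
  exact (g.naturality _).symm

theorem mono_map_of_eq {P : Type*} [Preorder P] (F : P ⥤ C) {a b a' b' : P} (f : a ⟶ b)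
    (f' : a' ⟶ b') (ha : a = a') (hb : b = b') [Mono (F.map f')] : Mono (F.map f) := by
  subst ha hb
  obtain rfl := Subsingleton.elim f f'
  assumption

theorem mono_clampFunctor_comp_map {F : Fin (m + 1) ⥤ C}
    (hF : ∀ k (h : k + 1 < m + 1), Mono (F.map (consecHom (m + 1) k h))) (i : ℕ) :
    Mono ((clampFunctor m ⋙ F).map (homOfLE (Nat.le_add_right i 1))) := by
  by_cases hi : i < m
  · have hi' : i + 1 < m + 1 := by omega
    have := hF i hi'
    exact mono_map_of_eq F _ (consecHom (m + 1) i hi')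
      (Fin.ext (min_eq_left hi.le)) (Fin.ext (min_eq_left hi))
  · have : Mono (F.map (𝟙 (Fin.last m))) := by rw [F.map_id]; infer_instance
    exact mono_map_of_eq F _ (𝟙 (Fin.last m))
      (Fin.clamp_eq_last _ _ (by omega)) (Fin.clamp_eq_last _ _ (by omega))

end Clamp

section RMonFin

variable {C : Type*} [Category C] [Abelian C] [HasInjectiveHulls C] {m : ℕ}
  (X : Fin (m + 1) ⥤ C)

/- `X` is extended to `ℕ` by repeating its last object, and `rMon` of the extension is restricted
back to `Fin (m + 1)`. -/
noncomputable abbrev rMonFin : Fin (m + 1) ⥤ C := finValFunctor m ⋙ rMon (clampFunctor m ⋙ X)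

noncomputable def rMonFinπ : rMonFin X ⟶ X :=
  Functor.whiskerLeft (finValFunctor m) (rMonπ _) ≫ (clampRestrictIso m X).hom

theorem rMonFin_map_mono (k : ℕ) (h : k + 1 < m + 1) :
    Mono ((rMonFin X).map (consecHom (m + 1) k h)) :=
  inferInstanceAs (Mono ((rMon _).map (homOfLE (Nat.le_add_right k 1))))

instance : Epi (rMonFinπ X) := by
  have (k : Fin (m + 1)) :
      Epi ((Functor.whiskerLeft (finValFunctor m) (rMonπ (clampFunctor m ⋙ X))).app k) :=
    inferInstanceAs (Epi ((rMonπ _).app k.val))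
  have : Epi (Functor.whiskerLeft (finValFunctor m) (rMonπ (clampFunctor m ⋙ X))) :=
    NatTrans.epi_of_epi_app _
  exact epi_comp (Functor.whiskerLeft (finValFunctor m) (rMonπ (clampFunctor m ⋙ X))) _

theorem exists_lift_rMonFinπ {C' : Fin (m + 1) ⥤ C}
    (hC' : ∀ k (h : k + 1 < m + 1), Mono (C'.map (consecHom (m + 1) k h))) (g : C' ⟶ X) :
    ∃ h : C' ⟶ rMonFin X, h ≫ rMonFinπ X = g := by
  obtain ⟨h, hh⟩ := exists_lift_rMonπ (mono_clampFunctor_comp_map m hC')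
    (Functor.whiskerLeft (clampFunctor m) g)
  refine ⟨(clampRestrictIso m C').inv ≫ Functor.whiskerLeft (finValFunctor m) h, ?_⟩
  rw [rMonFinπ, Category.assoc, ← Category.assoc (Functor.whiskerLeft _ h),
    ← Functor.whiskerLeft_comp, hh, clampRestrictIso_hom_naturality, Iso.inv_hom_id_assoc]

theorem isIso_of_comp_rMonFinπ (h : rMonFin X ⟶ rMonFin X) (hh : h ≫ rMonFinπ X = rMonFinπ X) :
    IsIso h := by
  set Y := clampFunctor m ⋙ X
  have hπ : h ≫ Functor.whiskerLeft (finValFunctor m) (rMonπ Y) =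
      Functor.whiskerLeft (finValFunctor m) (rMonπ Y) :=
    (cancel_mono (clampRestrictIso m X).hom).1 (by rwa [Category.assoc])
  have hfst (k : Fin (m + 1)) : h.app k ≫ biprod.fst = biprod.fst := congr_app hπ k
  have hnat (k : ℕ) (hk : k < m) :
      rMonMap Y k ≫ h.app ⟨k + 1, by omega⟩ = h.app ⟨k, by omega⟩ ≫ rMonMap Y k := by
    have := h.naturality (homOfLE (show (⟨k, by omega⟩ : Fin (m + 1)) ≤ ⟨k + 1, by omega⟩ from
      Nat.le_add_right k 1))
    rw [← rMon_map_succ]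
    exact this
  have hJ (k : ℕ) (hk : k < m + 1) : IsIso (biprod.inr ≫ h.app ⟨k, hk⟩ ≫ biprod.snd) := by
    induction k with
    | zero => exact IsZero.isIso (isZero_zero C) (isZero_zero C) _
    | succ k ih =>
      exact isIso_inr_comp_snd_of_rMonStep _ _ _ (isInjectiveHull_kernel_ι_toKerHull Y k)
        (hnat k (by omega)) (hfst _) (ih (by omega))
  have (k : Fin (m + 1)) : IsIso (h.app k) := isIso_of_comp_fst_eq_fst _ (hfst k) (hJ k k.2)
  exact NatIso.isIso_of_isIso_app h

noncomputable def rMonFinObjIso (k : Fin (m + 1)) :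
    (rMonFin X).obj k ≅ X.obj k ⊞ kerHullSum (clampFunctor m ⋙ X) k.val :=
  biprod.mapIso ((clampRestrictIso m X).app k) (Iso.refl _)

end RMonFin

theorem stmt12_general (A : Type) [Ring A]
    (n : ℕ) (hn : 2 ≤ n)
    (X : Fin n ⥤ ModuleCat A) :
    ∃ (C : Fin n ⥤ ModuleCat A) (f : C ⟶ X),
      SnA A n C ∧ Epi f ∧
      -- `f` is a right approximation of `X` in `S_n(A)` :
      (∀ C' : Fin n ⥤ ModuleCat A, SnA A n C' → ∀ g : C' ⟶ X, ∃ h : C' ⟶ C, h ≫ f = g) ∧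
      -- `f` is right minimal :
      (∀ h : C ⟶ C, h ≫ f = f → IsIso h) ∧
      -- the shape of `rMon(X)` : each branch is the branch of `X` ⊕ an injective module
      (∀ k : Fin n, ∃ J : ModuleCat A, Injective J ∧ Nonempty (C.obj k ≅ X.obj k ⊞ J)) := by
  obtain ⟨m, rfl⟩ : ∃ m, n = m + 1 := ⟨n - 1, by omega⟩
  exact ⟨rMonFin X, rMonFinπ X, rMonFin_map_mono X, inferInstance,
    fun _ hC' g => exists_lift_rMonFinπ X hC' g, isIso_of_comp_rMonFinπ X,
    fun k => ⟨_, inferInstance, ⟨rMonFinObjIso X k⟩⟩⟩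

/-- Let `A` be an Artin algebra and `n ≥ 2`.  For every object `X` of
`Mor_n(A)` there is an epimorphism `rMon(X) → X` which is a right minimal approximation of
`X` in the monomorphism category `S_n(A)`, and whose source has, in each branch, the
corresponding branch of `X` plus an injective module as a direct summand (the shape of the
construction `rMon`).  In particular `S_n(A)` is contravariantly finite in `Mor_n(A)`. -/
theorem stmt12 (Rb : Type) [CommRing Rb] [IsArtinianRing Rb]
    (A : Type) [Ring A] [Algebra Rb A] [Module.Finite Rb A]
    (n : ℕ) (hn : 2 ≤ n)
    (X : Fin n ⥤ ModuleCat A) :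
    ∃ (C : Fin n ⥤ ModuleCat A) (f : C ⟶ X),
      SnA A n C ∧ Epi f ∧
      -- `f` is a right approximation of `X` in `S_n(A)` :
      (∀ C' : Fin n ⥤ ModuleCat A, SnA A n C' → ∀ g : C' ⟶ X, ∃ h : C' ⟶ C, h ≫ f = g) ∧
      -- `f` is right minimal :
      (∀ h : C ⟶ C, h ≫ f = f → IsIso h) ∧
      -- the shape of `rMon(X)` : each branch is the branch of `X` ⊕ an injective module
      (∀ k : Fin n, ∃ J : ModuleCat A, Injective J ∧ Nonempty (C.obj k ≅ X.obj k ⊞ J)) :=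
  stmt12_general A n hn X
end

section
/- For j ≥ 0, each A-module M, and each X = (X_i, φ_i) ∈ Mor_n(A), there are isomorphisms Ext^j_{T_n(A)}(m_i(M), X) ≅ Ext^j_A(M, X_i) for 1 ≤ i ≤ n, and Ext^j_{T_n(A)}(X, m_n(M)) ≅ Ext^j_A(X_1, M). -/
open CategoryTheory Limits

universe w₁ w₂

set_option synthInstance.maxHeartbeats 1000000
set_option maxHeartbeats 1000000

/-- The object `m_i(M)` of `Mor_n(A) = (Fin n ⥤ ModuleCat A)`: the paper's branch `j`
(`1 ≤ j ≤ n`) is the object at index `n - j`, so `m_i(M)` has `M` (with identity structure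
maps) at the indices `k` with `n - i ≤ k`, and `0` elsewhere. -/
noncomputable def mObj (A : Type) [Ring A] (n : ℕ) (i : ℕ) (M : ModuleCat A) :
    Fin n ⥤ ModuleCat A where
  obj k := if n - i ≤ k.1 then M else ModuleCat.of A PUnit
  map {k l} f :=
    if h : n - i ≤ k.1 then
      eqToHom (by
        have hl : n - i ≤ l.1 := le_trans h (leOfHom f)
        simp [h, hl])
    else 0
  map_id k := by
    by_cases h : n - i ≤ k.1
    · simp [h]
    · simp only [dif_neg h]
      haveI : Subsingleton
          (ModuleCat.carrier (if n - i ≤ (k : ℕ) then M else ModuleCat.of A PUnit)) := by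
        simp only [if_neg h]
        exact inferInstanceAs (Subsingleton PUnit)
      ext x
      exact Subsingleton.elim _ _
  map_comp {k l m} f g := by
    by_cases h : n - i ≤ k.1
    · have hl : n - i ≤ l.1 := le_trans h (leOfHom f)
      have hm : n - i ≤ m.1 := le_trans hl (leOfHom g)
      simp [h, hl, hm]
    · simp [h]

/-!
`m_i(M)` is left adjoint to evaluation at branch `i`: a morphism `m_i(M) ⟶ X` is determined by
its component at branch `i`, the others being forced by naturality or zero. Also `m_n(M)` is the
constant diagram on `M`, which is right adjoint to evaluation at the terminal index, i.e. at
branch `1`. All functors involved are exact, so the adjunctions pass to the derived categories,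
where they commute with shifts and with the embeddings of the module categories; since
`Ext^j(P, Q) = Hom(P, Q[j])` there, the adjunction bijections become the required isomorphisms.
-/

namespace CategoryTheory

variable {C₁ C₂ : Type*} [Category C₁] [Category C₂]

def Adjunction.mapHomologicalComplex [Preadditive C₁] [Preadditive C₂] {F : C₁ ⥤ C₂}
    {G : C₂ ⥤ C₁} [F.Additive] [G.Additive] (adj : F ⊣ G) {ι : Type*} (c : ComplexShape ι) :
    F.mapHomologicalComplex c ⊣ G.mapHomologicalComplex c where
  unit :=
    { app K :=
        { f i := adj.unit.app (K.X i)
          comm' i j _ := (adj.unit.naturality (K.d i j)).symm }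
      naturality K L f := by ext i; exact adj.unit.naturality (f.f i) }
  counit :=
    { app L :=
        { f i := adj.counit.app (L.X i)
          comm' i j _ := (adj.counit.naturality (L.d i j)).symm }
      naturality K L f := by ext i; exact adj.counit.naturality (f.f i) }
  left_triangle_components K := by ext i; exact adj.left_triangle_components (K.X i)
  right_triangle_components L := by ext i; exact adj.right_triangle_components (L.X i)

def evaluationConstAdjunction {J : Type*} [Category J] {t : J} (ht : IsTerminal t) (C : Type*)
    [Category C] : (evaluation J C).obj t ⊣ Functor.const J where
  unit :=
    { app X :=
        { app k := X.map (ht.from k)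
          naturality k l g := by simp [← X.map_comp, ht.hom_ext (g ≫ ht.from l) (ht.from k)] } }
  counit := { app M := 𝟙 M }
  left_triangle_components X := by simp

variable [Abelian C₁] [Abelian C₂] {F : C₁ ⥤ C₂} {G : C₂ ⥤ C₁}

open _root_.DerivedCategory in
noncomputable def Adjunction.mapDerivedCategory [HasDerivedCategory C₁] [HasDerivedCategory C₂]
    (adj : F ⊣ G) [F.Additive] [G.Additive] [PreservesFiniteLimits F] [PreservesFiniteColimits F]
    [PreservesFiniteLimits G] [PreservesFiniteColimits G] :
    F.mapDerivedCategory ⊣ G.mapDerivedCategory :=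
  letI : CatCommSq (F.mapHomologicalComplex (ComplexShape.up ℤ)) Q Q F.mapDerivedCategory :=
    ⟨F.mapDerivedCategoryFactors.symm⟩
  letI : CatCommSq (G.mapHomologicalComplex (ComplexShape.up ℤ)) Q Q G.mapDerivedCategory :=
    ⟨G.mapDerivedCategoryFactors.symm⟩
  (adj.mapHomologicalComplex _).localization Q (HomologicalComplex.quasiIso C₁ _)
    Q (HomologicalComplex.quasiIso C₂ _) _ _

open Abelian

noncomputable def Abelian.Ext.addEquivOfIso {C : Type*} [Category C] [Abelian C] [HasExt.{w₁} C]
    {X X' Y Y' : C} (e : X ≅ X') (e' : Y ≅ Y') (n : ℕ) : Ext X Y n ≃+ Ext X' Y' n :=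
  letI := HasDerivedCategory.standard C
  let single := DerivedCategory.singleFunctor C 0
  Ext.homAddEquiv.trans <|
    (Linear.homCongr ℤ (single.mapIso e)
      ((shiftFunctor _ (n : ℤ)).mapIso (single.mapIso e'))).toAddEquiv.trans
    Ext.homAddEquiv.symm

noncomputable def Adjunction.extAddEquiv [HasExt.{w₁} C₁] [HasExt.{w₂} C₂] (adj : F ⊣ G)
    [F.Additive] [PreservesFiniteLimits F] [PreservesFiniteColimits G]
    (M : C₁) (Y : C₂) (n : ℕ) : Ext (F.obj M) Y n ≃+ Ext M (G.obj Y) n :=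
  letI := HasDerivedCategory.standard C₁
  letI := HasDerivedCategory.standard C₂
  haveI := adj.right_adjoint_additive
  haveI := adj.leftAdjoint_preservesColimits
  haveI := adj.rightAdjoint_preservesLimits
  Ext.homAddEquiv.trans <|
    (Linear.homCongr ℤ ((F.mapDerivedCategorySingleFunctor 0).app M).symm
      (Iso.refl _)).toAddEquiv.trans <|
    (adj.mapDerivedCategory.homAddEquiv _ _).trans <|
    (Linear.homCongr ℤ (Iso.refl _) ((G.mapDerivedCategory.commShiftIso (n : ℤ)).app _ ≪≫
      (shiftFunctor _ (n : ℤ)).mapIso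
        ((G.mapDerivedCategorySingleFunctor 0).app Y))).toAddEquiv.trans
    Ext.homAddEquiv.symm

end CategoryTheory

def Fin.isTerminalSubOne {n : ℕ} (hn : 0 < n) :
    IsTerminal (⟨n - 1, Nat.sub_one_lt_of_lt hn⟩ : Fin n) :=
  IsTerminal.ofUniqueHom (fun k => homOfLE (Fin.le_def.2 (Nat.le_sub_one_of_lt k.2)))
    fun _ _ => Subsingleton.elim _ _

namespace mObj

variable {A : Type} [Ring A] {n i : ℕ}

lemma obj_of_le (M : ModuleCat A) {k : Fin n} (h : n - i ≤ k.1) : (mObj A n i M).obj k = M := by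
  simp [mObj, h]

lemma isZero_obj (M : ModuleCat A) {k : Fin n} (h : ¬ n - i ≤ k.1) :
    IsZero ((mObj A n i M).obj k) := by
  simpa [mObj, h] using ModuleCat.isZero_of_subsingleton (ModuleCat.of A PUnit)

lemma map_of_le (M : ModuleCat A) {k l : Fin n} (g : k ⟶ l) (h : n - i ≤ k.1) :
    (mObj A n i M).map g =
      eqToHom ((obj_of_le M h).trans (obj_of_le M (h.trans (leOfHom g))).symm) := by
  simp [mObj, h]

noncomputable def isoConst (M : ModuleCat A) :
    mObj A n n M ≅ (Functor.const (Fin n)).obj M :=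
  NatIso.ofComponents (fun _ => eqToIso (obj_of_le M (by simp))) fun g => by
    simp [map_of_le (i := n) M g (by simp)]

variable (hi : n - i < n)

lemma hom_ext {M : ModuleCat A} {X : Fin n ⥤ ModuleCat A} {η η' : mObj A n i M ⟶ X}
    (h : η.app ⟨n - i, hi⟩ = η'.app ⟨n - i, hi⟩) : η = η' := by
  ext l : 2
  by_cases hl : n - i ≤ l.1
  · have hη := η.naturality (homOfLE hl : (⟨n - i, hi⟩ : Fin n) ⟶ l)
    have hη' := η'.naturality (homOfLE hl : (⟨n - i, hi⟩ : Fin n) ⟶ l)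
    rw [h, ← hη', map_of_le M _ le_rfl] at hη
    exact (cancel_epi _).1 hη
  · exact (isZero_obj M hl).eq_of_src _ _

noncomputable def homEquiv (M : ModuleCat A) (X : Fin n ⥤ ModuleCat A) :
    (mObj A n i M ⟶ X) ≃ (M ⟶ X.obj ⟨n - i, hi⟩) where
  toFun η := eqToHom (obj_of_le M le_rfl).symm ≫ η.app ⟨n - i, hi⟩
  invFun f :=
    { app l := if h : n - i ≤ l.1 then eqToHom (obj_of_le M h) ≫ f ≫ X.map (homOfLE h) else 0
      naturality l l' g := by
        by_cases h : n - i ≤ l.1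
        · rw [dif_pos h, dif_pos (h.trans (leOfHom g)), map_of_le M g h]
          simp only [eqToHom_trans_assoc, Category.assoc, ← X.map_comp]
          rfl -- `Fin n` is thin
        · exact (isZero_obj M h).eq_of_src _ _ }
  left_inv η := hom_ext hi (by simp)
  right_inv f := by simp

variable (A)

noncomputable def functor : ModuleCat A ⥤ (Fin n ⥤ ModuleCat A) :=
  Adjunction.leftAdjointOfEquiv (G := (evaluation (Fin n) (ModuleCat A)).obj ⟨n - i, hi⟩)
    (homEquiv hi) fun _ _ _ _ _ => by simp [homEquiv]

noncomputable def adjunction :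
    functor A hi ⊣ (evaluation (Fin n) (ModuleCat A)).obj ⟨n - i, hi⟩ :=
  Adjunction.adjunctionOfEquivLeft _ _

noncomputable def functorCompEvaluationIso {l : Fin n} (h : n - i ≤ l.1) :
    functor A hi ⋙ (evaluation (Fin n) (ModuleCat A)).obj l ≅ 𝟭 (ModuleCat A) :=
  NatIso.ofComponents (fun M => eqToIso (obj_of_le M h)) fun f => by
    dsimp [functor, homEquiv]
    rw [dif_pos h, map_of_le _ _ le_rfl]
    simp

instance : PreservesFiniteLimits (functor A hi) := by
  refine preservesFiniteLimits_of_evaluation _ fun l => ?_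
  by_cases h : n - i ≤ l.1
  · exact preservesFiniteLimits_of_natIso (functorCompEvaluationIso A hi h).symm
  · have hzero : IsZero (functor A hi ⋙ (evaluation (Fin n) (ModuleCat A)).obj l) :=
      Functor.isZero _ fun M => isZero_obj M h
    exact ⟨fun J _ _ => Functor.preservesLimitsOfShape_of_isZero _ hzero J⟩

instance : (functor A hi).Additive := (adjunction A hi).left_adjoint_additive

end mObj

/-- Let `A` be an Artin algebra and `n ≥ 2`, with `Mor_n(A)` identified with
`T_n(A)`-mod.  For every `j ≥ 0`, every `A`-module `M` and every `X ∈ Mor_n(A)` there are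
isomorphisms of abelian groups `Ext^j_{T_n(A)}(m_i(M), X) ≅ Ext^j_A(M, X_i)` (`1 ≤ i ≤ n`)
and `Ext^j_{T_n(A)}(X, m_n(M)) ≅ Ext^j_A(X_1, M)`.  (Branch `i` of `X` is `X.obj ⟨n - i, _⟩`.) -/
theorem stmt14
    (A : Type) [Ring A]
    (n : ℕ) (hn : 2 ≤ n)
    [HasExt.{w₁} (Fin n ⥤ ModuleCat A)] [HasExt.{w₂} (ModuleCat A)]
    (M : ModuleCat A) (X : Fin n ⥤ ModuleCat A) :
    ∀ j : ℕ,
      (∀ i : ℕ, (hi1 : 1 ≤ i) → (hi2 : i ≤ n) →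
        Nonempty (Abelian.Ext (mObj A n i M) X j ≃+
          Abelian.Ext M (X.obj ⟨n - i, by omega⟩) j)) ∧
      Nonempty (Abelian.Ext X (mObj A n n M) j ≃+
        Abelian.Ext (X.obj ⟨n - 1, by omega⟩) M j) := by
  intro j
  refine ⟨fun i hi1 hi2 => ⟨(mObj.adjunction A (i := i) (by omega)).extAddEquiv M X j⟩, ?_⟩
  exact ⟨(Abelian.Ext.addEquivOfIso (Iso.refl X) (mObj.isoConst M) j).trans
    ((evaluationConstAdjunction (Fin.isTerminalSubOne (by omega)) _).extAddEquiv X M j).symm⟩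
end
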